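/- Let T = {(x, y) ∈ ℝ² : x ≥ 0, y ≥ 0, x + y ≤ 1} be the reference triangle with barycentric coordinate functions λ₁(x, y) = 1 − x − y, λ₂(x, y) = x, λ₃(x, y) = y, let 0 < ε ≤ 1, and let σ be a measurable set with {(x, y) : x ≥ 0, y ≥ 0, x + y ≤ ε} ⊆ σ ⊆ T. Then any function ψ in the span of λ₁, λ₂, λ₃ satisfying ∫_σ ψ λ_j dx dy = δ_{1j} for j = 1, 2, 3 has ∫_σ ψ² dx dy ≤ 18 ε^{-2}. -/

import Mathlib

/-!
Write a dual function `ψ` on `σ` as `ψ = ∑ aᵢ λᵢ`. Duality gives `∫_σ ψ² = a₁`, and if `φ` is dual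
on a subset `S ⊆ σ` it also gives `∫_S ψ φ = a₁`; hence
`0 ≤ ∫_S (ψ - φ)² ≤ ∫_σ ψ² - 2 a₁ + ∫_S φ² = ∫_S φ² - ∫_σ ψ²`.
On the corner triangle `S` of size `ε` the dual of `λ₁` is `φ = 18/ε² - 24/ε³ (x + y)`, with
`∫_S φ² = 18/ε²`.
-/

open MeasureTheory Set

section Dual

variable {α ι : Type*} [MeasurableSpace α] [Fintype ι] {μ ν : Measure α} {f : ι → α → ℝ}

lemma memLp_of_mem_span (hf : ∀ i, MemLp (f i) 2 μ) {ψ : α → ℝ}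
    (hψ : ψ ∈ Submodule.span ℝ (range f)) : MemLp ψ 2 μ := by
  obtain ⟨a, rfl⟩ := (Submodule.mem_span_range_iff_exists_fun ℝ).1 hψ
  exact memLp_finsetSum' _ fun i _ => (hf i).const_smul (a i)

variable [DecidableEq ι] {i₀ : ι}

def IsDualFunction (μ : Measure α) (f : ι → α → ℝ) (i₀ : ι) (ψ : α → ℝ) : Prop :=
  ψ ∈ Submodule.span ℝ (range f) ∧ ∀ j, ∫ x, ψ x * f j x ∂μ = if j = i₀ then 1 else 0

lemma integral_mul_sum_smul_of_dual {h : α → ℝ}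
    (hint : ∀ i, Integrable (fun x => h x * f i x) μ)
    (hdual : ∀ j, ∫ x, h x * f j x ∂μ = if j = i₀ then 1 else 0) (a : ι → ℝ) :
    ∫ x, h x * (∑ i, a i • f i) x ∂μ = a i₀ := by
  simp only [Finset.sum_apply, Pi.smul_apply, smul_eq_mul, Finset.mul_sum, mul_left_comm (h _)]
  rw [integral_finsetSum _ fun i _ => (hint i).const_mul (a i)]
  simp [integral_const_mul, hdual]

theorem IsDualFunction.integral_sq_le (hle : μ ≤ ν) (hf : ∀ i, MemLp (f i) 2 ν) {ψ φ : α → ℝ}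
    (hψ : IsDualFunction ν f i₀ ψ) (hφ : IsDualFunction μ f i₀ φ) :
    ∫ x, ψ x ^ 2 ∂ν ≤ ∫ x, φ x ^ 2 ∂μ := by
  have hfμ : ∀ i, MemLp (f i) 2 μ := fun i => (hf i).mono_measure hle
  have hψν := memLp_of_mem_span hf hψ.1
  have hψμ := hψν.mono_measure hle
  have hφμ := memLp_of_mem_span hfμ hφ.1
  obtain ⟨a, hψa⟩ := (Submodule.mem_span_range_iff_exists_fun ℝ).1 hψ.1
  have hψψ : ∫ x, ψ x ^ 2 ∂ν = a i₀ := by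
    simp only [sq]
    conv_lhs => enter [2, x, 2]; rw [← hψa]
    exact integral_mul_sum_smul_of_dual (fun i => hψν.integrable_mul (hf i)) hψ.2 a
  have hφψ : ∫ x, φ x * ψ x ∂μ = a i₀ := by
    rw [← hψa]
    exact integral_mul_sum_smul_of_dual (fun i => hφμ.integrable_mul (hfμ i)) hφ.2 a
  have hrestrict : ∫ x, ψ x ^ 2 ∂μ ≤ ∫ x, ψ x ^ 2 ∂ν :=
    integral_mono_measure hle (Filter.Eventually.of_forall fun x => sq_nonneg _)
      hψν.integrable_sq
  have hexpand : ∫ x, (ψ x - φ x) ^ 2 ∂μ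
      = ∫ x, ψ x ^ 2 ∂μ - 2 * ∫ x, φ x * ψ x ∂μ + ∫ x, φ x ^ 2 ∂μ := by
    have hsq : (fun x => (ψ x - φ x) ^ 2) = fun x => ψ x ^ 2 - 2 * (φ x * ψ x) + φ x ^ 2 := by
      ext x; ring
    have hψ2 : Integrable (fun x => ψ x ^ 2) μ := hψμ.integrable_sq
    have hφψ2 : Integrable (fun x => 2 * (φ x * ψ x)) μ := (hφμ.integrable_mul hψμ).const_mul 2
    rw [hsq, integral_add (f := fun x => ψ x ^ 2 - 2 * (φ x * ψ x)) (hψ2.sub hφψ2)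
      hφμ.integrable_sq, integral_sub hψ2 hφψ2, integral_const_mul]
  have hnonneg : 0 ≤ ∫ x, (ψ x - φ x) ^ 2 ∂μ := integral_nonneg fun x => sq_nonneg _
  linarith

end Dual

lemma integral_cubic (c₀ c₁ c₂ c₃ b : ℝ) :
    ∫ x in 0..b, (c₀ + c₁ * x + c₂ * x ^ 2 + c₃ * x ^ 3)
      = c₀ * b + c₁ * b ^ 2 / 2 + c₂ * b ^ 3 / 3 + c₃ * b ^ 4 / 4 := by
  have hderiv : ∀ x ∈ uIcc 0 b, HasDerivAt
      (fun x => c₀ * x + c₁ / 2 * x ^ 2 + c₂ / 3 * x ^ 3 + c₃ / 4 * x ^ 4)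
      (c₀ + c₁ * x + c₂ * x ^ 2 + c₃ * x ^ 3) x := fun x _ => by
    refine ((((hasDerivAt_id x).const_mul c₀).add
      ((hasDerivAt_pow 2 x).const_mul (c₁ / 2))).add
      ((hasDerivAt_pow 3 x).const_mul (c₂ / 3))).add
      ((hasDerivAt_pow 4 x).const_mul (c₃ / 4)) |>.congr_deriv ?_
    ring
  rw [intervalIntegral.integral_eq_sub_of_hasDerivAt hderiv
    (Continuous.intervalIntegrable (by fun_prop) _ _)]
  ring

def cornerTriangle (ε : ℝ) : Set (ℝ × ℝ) := {p | 0 ≤ p.1 ∧ 0 ≤ p.2 ∧ p.1 + p.2 ≤ ε}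

def affineFn (a₀ a₁ a₂ : ℝ) (p : ℝ × ℝ) : ℝ := a₀ + a₁ * p.1 + a₂ * p.2

section CornerTriangle

variable {ε : ℝ}

lemma isClosed_cornerTriangle : IsClosed (cornerTriangle ε) :=
  (isClosed_le continuous_const continuous_fst).inter
    ((isClosed_le continuous_const continuous_snd).inter
      (isClosed_le (continuous_fst.add continuous_snd) continuous_const))

lemma isCompact_cornerTriangle : IsCompact (cornerTriangle ε) :=
  (isCompact_Icc (a := ((0 : ℝ), (0 : ℝ))) (b := (ε, ε))).of_isClosed_subset
    isClosed_cornerTriangle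
    fun _ ⟨hx, hy, hxy⟩ => ⟨⟨hx, hy⟩, by constructor <;> linarith⟩

lemma indicator_cornerTriangle (f : ℝ × ℝ → ℝ) (x y : ℝ) :
    (cornerTriangle ε).indicator f (x, y)
      = (Icc 0 ε).indicator (fun x => (Icc 0 (ε - x)).indicator (fun y => f (x, y)) y) x := by
  simp only [indicator, cornerTriangle, mem_Icc]
  split_ifs <;> grind

lemma integral_cornerTriangle (hε : 0 ≤ ε) {f : ℝ × ℝ → ℝ} (hf : Continuous f) :
    ∫ p in cornerTriangle ε, f p = ∫ x in 0..ε, ∫ y in 0..(ε - x), f (x, y) := by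
  have hint : Integrable ((cornerTriangle ε).indicator f) :=
    (integrable_indicator_iff isClosed_cornerTriangle.measurableSet).2
      (hf.continuousOn.integrableOn_compact isCompact_cornerTriangle)
  have hslice : ∀ x, ∫ y, (cornerTriangle ε).indicator f (x, y)
      = (Icc 0 ε).indicator (fun x => ∫ y in 0..(ε - x), f (x, y)) x := by
    intro x
    simp only [indicator_cornerTriangle]
    by_cases hx : x ∈ Icc 0 ε
    · rw [indicator_of_mem hx, intervalIntegral.integral_of_le (by linarith [hx.2]),
        ← integral_Icc_eq_integral_Ioc, ← integral_indicator measurableSet_Icc]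
      simp only [indicator_of_mem hx]
    · simp [indicator_of_notMem hx]
  rw [← integral_indicator isClosed_cornerTriangle.measurableSet, Measure.volume_eq_prod,
    integral_prod _ hint]
  simp only [hslice]
  rw [integral_indicator measurableSet_Icc, integral_Icc_eq_integral_Ioc,
    ← intervalIntegral.integral_of_le hε]

lemma integral_cornerTriangle_affineFn_mul (hε : 0 ≤ ε) (a₀ a₁ a₂ b₀ b₁ b₂ : ℝ) :
    ∫ p in cornerTriangle ε, affineFn a₀ a₁ a₂ p * affineFn b₀ b₁ b₂ p
      = a₀ * b₀ * ε ^ 2 / 2 + (a₀ * (b₁ + b₂) + b₀ * (a₁ + a₂)) * ε ^ 3 / 6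
        + (a₁ * b₁ + a₂ * b₂) * ε ^ 4 / 12 + (a₁ * b₂ + a₂ * b₁) * ε ^ 4 / 24 := by
  rw [integral_cornerTriangle hε (by unfold affineFn; fun_prop)]
  simp only [affineFn]
  set P := a₀ * b₁ + a₁ * b₀
  set Q := a₀ * b₂ + a₂ * b₀
  set R := a₁ * b₂ + a₂ * b₁
  -- the inner integral is `A t + B t² / 2 + C t³ / 3` at `t = ε - x`, expanded in powers of `x`
  have hslice : ∀ x, ∫ y in 0..(ε - x), (a₀ + a₁ * x + a₂ * y) * (b₀ + b₁ * x + b₂ * y)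
      = (a₀ * b₀ * ε + Q * ε ^ 2 / 2 + a₂ * b₂ * ε ^ 3 / 3)
        + (P * ε - a₀ * b₀ + R * ε ^ 2 / 2 - Q * ε - a₂ * b₂ * ε ^ 2) * x
        + (a₁ * b₁ * ε - P + Q / 2 - R * ε + a₂ * b₂ * ε) * x ^ 2
        + (R / 2 - a₁ * b₁ - a₂ * b₂ / 3) * x ^ 3 := by
    intro x
    rw [show (fun y => (a₀ + a₁ * x + a₂ * y) * (b₀ + b₁ * x + b₂ * y))
        = fun y => (a₀ + a₁ * x) * (b₀ + b₁ * x) + ((a₀ + a₁ * x) * b₂ + a₂ * (b₀ + b₁ * x)) * y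
          + a₂ * b₂ * y ^ 2 + 0 * y ^ 3 from funext fun y => by ring, integral_cubic]
    ring
  simp only [hslice, integral_cubic]
  ring

end CornerTriangle

def barycentric : Fin 3 → ℝ × ℝ → ℝ := ![fun p => 1 - p.1 - p.2, fun p => p.1, fun p => p.2]

lemma memLp_barycentric {σ : Set (ℝ × ℝ)} (hσ : σ ⊆ cornerTriangle 1) (i : Fin 3) :
    MemLp (barycentric i) 2 (volume.restrict σ) := by
  have hcont : Continuous (barycentric i) := by
    fin_cases i <;>
      simp only [barycentric, Fin.zero_eta, Fin.mk_one, Fin.reduceFinMk, Matrix.cons_val_zero,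
        Matrix.cons_val_one, Matrix.cons_val_two, Matrix.tail_cons, Matrix.head_cons] <;>
      fun_prop
  refine MemLp.mono_measure (Measure.restrict_mono hσ le_rfl) ?_
  exact (memLp_two_iff_integrable_sq hcont.aestronglyMeasurable).2
    ((hcont.pow 2).continuousOn.integrableOn_compact isCompact_cornerTriangle)

noncomputable def cornerDual (ε : ℝ) : ℝ × ℝ → ℝ :=
  affineFn (18 / ε ^ 2) (-24 / ε ^ 3) (-24 / ε ^ 3)

lemma isDualFunction_cornerDual {ε : ℝ} (hε : 0 < ε) :
    IsDualFunction (volume.restrict (cornerTriangle ε)) barycentric 0 (cornerDual ε) := by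
  have hbary : barycentric = ![affineFn 1 (-1) (-1), affineFn 0 1 0, affineFn 0 0 1] := by
    ext i p
    fin_cases i <;> simp [barycentric, affineFn, sub_eq_add_neg]
  refine ⟨(Submodule.mem_span_range_iff_exists_fun ℝ).2
    ⟨![18 / ε ^ 2, 18 / ε ^ 2 - 24 / ε ^ 3, 18 / ε ^ 2 - 24 / ε ^ 3], ?_⟩, fun j => ?_⟩
  · ext p
    simp only [Fin.sum_univ_three, hbary, cornerDual, affineFn, Finset.sum_apply, Pi.smul_apply,
      smul_eq_mul, Matrix.cons_val_zero, Matrix.cons_val_one, Matrix.cons_val_two,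
      Matrix.tail_cons, Matrix.head_cons]
    ring
  · rw [hbary]
    fin_cases j <;>
      simp only [cornerDual, integral_cornerTriangle_affineFn_mul hε.le, Fin.zero_eta, Fin.mk_one,
        Fin.reduceFinMk, Matrix.cons_val_zero, Matrix.cons_val_one, Matrix.cons_val_two,
        Matrix.tail_cons, Matrix.head_cons, Fin.reduceEq, ↓reduceIte] <;>
      field_simp <;> ring

lemma integral_cornerDual_sq {ε : ℝ} (hε : 0 < ε) :
    ∫ p in cornerTriangle ε, cornerDual ε p ^ 2 = 18 / ε ^ 2 := by
  simp only [sq, cornerDual, integral_cornerTriangle_affineFn_mul hε.le]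
  field_simp
  ring

theorem intermediate_domain_dual_basis_bound_general
    (ε : ℝ) (hε0 : 0 < ε)
    (T : Set (ℝ × ℝ))
    (hT : T = {p : ℝ × ℝ | 0 ≤ p.1 ∧ 0 ≤ p.2 ∧ p.1 + p.2 ≤ 1})
    (lam : Fin 3 → ℝ × ℝ → ℝ)
    (hlam : lam = ![fun p => 1 - p.1 - p.2, fun p => p.1, fun p => p.2])
    (σ : Set (ℝ × ℝ))
    (hlower : {p : ℝ × ℝ | 0 ≤ p.1 ∧ 0 ≤ p.2 ∧ p.1 + p.2 ≤ ε} ⊆ σ)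
    (hupper : σ ⊆ T)
    (ψ : ℝ × ℝ → ℝ) (hψ : ψ ∈ Submodule.span ℝ (Set.range lam))
    (hdual : ∀ j, ∫ p in σ, ψ p * lam j p = if j = 0 then 1 else 0) :
    ∫ p in σ, (ψ p) ^ 2 ≤ 18 / ε ^ 2 := by
  subst hT hlam
  calc ∫ p in σ, ψ p ^ 2
      ≤ ∫ p in cornerTriangle ε, cornerDual ε p ^ 2 :=
        IsDualFunction.integral_sq_le (f := barycentric) (Measure.restrict_mono hlower le_rfl)
          (memLp_barycentric hupper) ⟨hψ, hdual⟩ (isDualFunction_cornerDual hε0)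
    _ = 18 / ε ^ 2 := integral_cornerDual_sq hε0

/-- If `σ` is a measurable set with the ε-scaled corner triangle contained in
`σ` and `σ` contained in the reference triangle `T`, then any dual function
`ψ` to `λ₁` on `σ` satisfies `∫_σ ψ² ≤ 18 ε⁻²`. -/
theorem intermediate_domain_dual_basis_bound
    (ε : ℝ) (hε0 : 0 < ε) (hε1 : ε ≤ 1)
    (T : Set (ℝ × ℝ))
    (hT : T = {p : ℝ × ℝ | 0 ≤ p.1 ∧ 0 ≤ p.2 ∧ p.1 + p.2 ≤ 1})
    (lam : Fin 3 → ℝ × ℝ → ℝ)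
    (hlam : lam = ![fun p => 1 - p.1 - p.2, fun p => p.1, fun p => p.2])
    (σ : Set (ℝ × ℝ)) (hσmeas : MeasurableSet σ)
    (hlower : {p : ℝ × ℝ | 0 ≤ p.1 ∧ 0 ≤ p.2 ∧ p.1 + p.2 ≤ ε} ⊆ σ)
    (hupper : σ ⊆ T)
    (ψ : ℝ × ℝ → ℝ) (hψ : ψ ∈ Submodule.span ℝ (Set.range lam))
    (hdual : ∀ j, ∫ p in σ, ψ p * lam j p = if j = 0 then 1 else 0) :
    ∫ p in σ, (ψ p) ^ 2 ≤ 18 / ε ^ 2 :=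
  intermediate_domain_dual_basis_bound_general ε hε0 T hT lam hlam σ hlower hupper ψ hψ hdual
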